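/- arXiv:1401.7568 — 2 statements merged into one kernel-verified Lean document; each statement's English description precedes it below -/
import Mathlib

section
/- Let η be a Poisson process with σ-finite intensity measure λ, and let P_s, s ∈ [0,1], be the thinning–superposition operator defined for F ∈ L¹_η with representative f by P_s F = ∫ E[ f(η^{(s)} + μ) | η ] Π_{(1−s)λ}(dμ), where η^{(s)} is an independent s-thinning of η and Π_{(1−s)λ} is the law of a Poisson process with intensity (1−s)λ. Then for every p ≥ 1 and every F ∈ L¹_η with |F|^p integrable, E[|P_s F|^p] ≤ E[|F|^p]. -/
/-!
Jensen's inequality for `t ↦ |t|^p`, applied to the two averages defining `P_s F`, bounds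
`|P_s F|^p` by `∫∫ |f(κ + ν)|^p Pi0(dν) T(η, dκ)`. Taking expectations, the mixing identity says
that `η^{(s)} + ν` has the law of `η`, so the right-hand side integrates to `E[|F|^p]`.
-/

open MeasureTheory ProbabilityTheory
open scoped ENNReal

/-- The thinning–superposition operator `P_s`: for a representative `f` of a Poisson functional,
`(Pthin T Pi0 f)(μ) = ∫∫ f(κ + ν) Pi0(dν) T(μ, dκ)`, where `T` is the conditional law of the
`s`-thinning `η^{(s)}` given `η = μ` and `Pi0 = Π_{(1−s)λ}` is the law of an independent Poisson
process with intensity `(1−s)λ`.  Thus `P_s F = (Pthin T Pi0 f)(η) = ∫ E[f(η^{(s)}+ν) | η] Pi0(dν)`. -/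
noncomputable def Pthin {X : Type*} [MeasurableSpace X]
    (T : Kernel (Measure X) (Measure X)) (Pi0 : Measure (Measure X))
    (f : Measure X → ℝ) (μ : Measure X) : ℝ :=
  ∫ κ, ∫ ν, f (κ + ν) ∂Pi0 ∂(T μ)

theorem enorm_integral_rpow_le_lintegral_enorm_rpow {Y E : Type*} [MeasurableSpace Y]
    [NormedAddCommGroup E] [NormedSpace ℝ E] (Q : Measure Y) [IsProbabilityMeasure Q]
    {g : Y → E} (hg : AEStronglyMeasurable g Q) {p : ℝ} (hp : 1 ≤ p) :
    ‖∫ y, g y ∂Q‖ₑ ^ p ≤ ∫⁻ y, ‖g y‖ₑ ^ p ∂Q :=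
  calc ‖∫ y, g y ∂Q‖ₑ ^ p ≤ eLpNorm' g 1 Q ^ p := by
        gcongr
        simpa [eLpNorm'_eq_lintegral_enorm] using enorm_integral_le_lintegral_enorm g
    _ ≤ eLpNorm' g p Q ^ p := by
        gcongr
        exact eLpNorm'_le_eLpNorm'_of_exponent_le one_pos hp Q hg
    _ = ∫⁻ y, ‖g y‖ₑ ^ p ∂Q := (lintegral_rpow_enorm_eq_rpow_eLpNorm' (by linarith)).symm

theorem lintegral_bind_map_add_prod {α M : Type*} [MeasurableSpace α] [MeasurableSpace M]
    [Add M] [MeasurableAdd₂ M] (π : Measure α) (T : Kernel α M) [IsSFiniteKernel T]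
    (ν : Measure M) [SFinite ν] {φ : M → ℝ≥0∞} (hφ : Measurable φ) :
    ∫⁻ z, φ z ∂π.bind (fun a => ((T a).prod ν).map (fun q : M × M => q.1 + q.2))
      = ∫⁻ a, ∫⁻ x, ∫⁻ y, φ (x + y) ∂ν ∂T a ∂π := by
  have hK : (fun a => ((T a).prod ν).map (fun q : M × M => q.1 + q.2))
      = (T ×ₖ Kernel.const α ν).map (fun q : M × M => q.1 + q.2) := by
    ext1 a
    rw [Kernel.map_apply _ measurable_add, Kernel.prod_apply, Kernel.const_apply]
  rw [hK, Measure.lintegral_bind (Kernel.measurable _).aemeasurable hφ.aemeasurable]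
  refine lintegral_congr fun a => ?_
  rw [Kernel.map_apply _ measurable_add, lintegral_map hφ measurable_add, Kernel.prod_apply,
    Kernel.const_apply]
  exact lintegral_prod (fun q : M × M => φ (q.1 + q.2)) (hφ.comp measurable_add).aemeasurable

theorem enorm_Pthin_rpow_le {X : Type*} [MeasurableSpace X]
    (T : Kernel (Measure X) (Measure X)) [IsMarkovKernel T]
    (Pi0 : Measure (Measure X)) [IsProbabilityMeasure Pi0]
    {f : Measure X → ℝ} (hf : Measurable f) {p : ℝ} (hp : 1 ≤ p) (μ : Measure X) :
    ‖Pthin T Pi0 f μ‖ₑ ^ p ≤ ∫⁻ κ, ∫⁻ ν, ‖f (κ + ν)‖ₑ ^ p ∂Pi0 ∂T μ := by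
  have hinner : Measurable fun κ => ∫ ν, f (κ + ν) ∂Pi0 :=
    (hf.comp measurable_add).stronglyMeasurable.integral_prod_right'.measurable
  refine (enorm_integral_rpow_le_lintegral_enorm_rpow (T μ) hinner.aestronglyMeasurable hp).trans
    (lintegral_mono fun κ => ?_)
  exact enorm_integral_rpow_le_lintegral_enorm_rpow Pi0
    (hf.comp (measurable_const_add κ)).aestronglyMeasurable hp

theorem lintegral_abs_Pthin_rpow_le_general {X Ω : Type*} [MeasurableSpace X] [MeasurableSpace Ω]
    (P : Measure Ω)
    (η : Ω → Measure X) (hη : Measurable η)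
    (T : Kernel (Measure X) (Measure X)) [IsMarkovKernel T]
    (Pi0 : Measure (Measure X)) [IsProbabilityMeasure Pi0]
    (hmix : (P.map η).bind
        (fun μ => ((T μ).prod Pi0).map (fun q : Measure X × Measure X => q.1 + q.2))
      = P.map η)
    (f : Measure X → ℝ) (hf : Measurable f)
    (p : ℝ) (hp : 1 ≤ p) :
    ∫⁻ ω, ENNReal.ofReal (|Pthin T Pi0 f (η ω)| ^ p) ∂P
      ≤ ∫⁻ ω, ENNReal.ofReal (|f (η ω)| ^ p) ∂P := by
  have hφ : Measurable fun ξ => ‖f ξ‖ₑ ^ p := hf.enorm.pow_const p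
  have hψ : Measurable fun μ => ∫⁻ κ, ∫⁻ ν, ‖f (κ + ν)‖ₑ ^ p ∂Pi0 ∂T μ :=
    ((hφ.comp measurable_add).lintegral_prod_right').lintegral_kernel
  have hofReal : ∀ x : ℝ, ENNReal.ofReal (|x| ^ p) = ‖x‖ₑ ^ p := fun x => by
    rw [← ENNReal.ofReal_rpow_of_nonneg (abs_nonneg x) (by linarith), Real.enorm_eq_ofReal_abs]
  simp only [hofReal]
  calc ∫⁻ ω, ‖Pthin T Pi0 f (η ω)‖ₑ ^ p ∂P
      ≤ ∫⁻ ω, ∫⁻ κ, ∫⁻ ν, ‖f (κ + ν)‖ₑ ^ p ∂Pi0 ∂T (η ω) ∂P :=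
        lintegral_mono fun ω => enorm_Pthin_rpow_le T Pi0 hf hp (η ω)
    _ = ∫⁻ μ, ∫⁻ κ, ∫⁻ ν, ‖f (κ + ν)‖ₑ ^ p ∂Pi0 ∂T μ ∂P.map η := (lintegral_map hψ hη).symm
    _ = ∫⁻ ξ, ‖f ξ‖ₑ ^ p ∂P.map η := by rw [← lintegral_bind_map_add_prod _ _ _ hφ, hmix]
    _ = ∫⁻ ω, ‖f (η ω)‖ₑ ^ p ∂P := lintegral_map hφ hη

/-- Contractivity of the thinning operator `P_s` on `L^p`, `p ≥ 1`:
`E[|P_s F|^p] ≤ E[|F|^p]` for `F = f(η)`.  The hypothesis `hmix` is the mixing identity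
`Pi0_λ = E ∫ 1{η^{(s)} + ν ∈ ·} Π_{(1−s)λ}(dν)`: superposing the `s`-thinning of `η` with an
independent Poisson process of intensity `(1−s)λ` reproduces the law of `η`. -/
theorem lintegral_abs_Pthin_rpow_le {X Ω : Type*} [MeasurableSpace X] [MeasurableSpace Ω]
    (P : Measure Ω) [IsProbabilityMeasure P]
    (η : Ω → Measure X) (hη : Measurable η)
    (T : Kernel (Measure X) (Measure X)) [IsMarkovKernel T]
    (Pi0 : Measure (Measure X)) [IsProbabilityMeasure Pi0]
    (hmix : (P.map η).bind
        (fun μ => ((T μ).prod Pi0).map (fun q : Measure X × Measure X => q.1 + q.2))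
      = P.map η)
    (f : Measure X → ℝ) (hf : Measurable f)
    (p : ℝ) (hp : 1 ≤ p) :
    ∫⁻ ω, ENNReal.ofReal (|Pthin T Pi0 f (η ω)| ^ p) ∂P
      ≤ ∫⁻ ω, ENNReal.ofReal (|f (η ω)| ^ p) ∂P :=
  lintegral_abs_Pthin_rpow_le_general P η hη T Pi0 hmix f hf p hp
end

section
/- In the d-dimensional k-nearest neighbour graph setting, let η_t be a Poisson process of intensity t on a compact convex window H ⊂ ℝ^d with interior points, and suppose that for all x, y ∈ H the probability that x and y are connected by an edge (i.e., y is among the k nearest neighbours of x in η_t + δ_y, or x among the k nearest of y in η_t + δ_x) satisfies P(edge between x,y) ≤ C̃ exp(−t c̃ ‖x−y‖^d) for some constants C̃, c̃ > 0. Then the length M₁(x, η_t) of the longest edge created by adding the point x to η_t has exponentially decaying tail: P(M₁(x,η_t) ≥ s) ≤ C̃₁ exp(−t c̃₁ s^d) for all s ≥ 0, x ∈ H, t ≥ 1, for suitable constants C̃₁, c̃₁ > 0. -/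
/-!
Instead of the Mecke equation we discretise. Cover `H` by countably many disjoint cells
`Q i ⊆ B(u i, δ)` with `u i ∈ H` and `4δ ≤ s`. If adding `x` creates an edge `xy` of length `≥ s`,
either `y` is among the `k` nearest neighbours of `x`, so `B(x, s)` holds fewer than `k` points, or
`x` is among the `k` nearest neighbours of `y`; then the cell `Q i ∋ y` is occupied while
`B(u i, r i) \ Q i`, with `r i = max(s, |x - u i|) / 2`, holds fewer than `k` points. Convexity
gives `|B(z, r) ∩ H| ≥ c r^d` for `z ∈ H`, `r ≤ diam H`, and counts over disjoint sets are
independent, so the cell event has probability at most `t |Q i| 2^k exp(-t c r_i^d / 4)`. After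
splitting off `exp(-t c (s/2)^d / 8)`, the sum over the cells is a Riemann sum for
`t ∫ exp(-a ‖w - x‖^d) dw = t |B(0, 1)| / a` with `a ≍ t`, which gives `C exp(-t c' s^d)`
uniformly in `t`.
-/

open MeasureTheory ProbabilityTheory Metric
open scoped ENNReal

/-- `η` is a Poisson process on `X` with intensity measure `lam` under `P`: `η` is measurable,
`η(A)` is Poisson distributed with mean `lam A` for every measurable `A` of finite intensity, and
the counts over pairwise disjoint measurable sets are independent. -/
def IsPoissonProcess {Ω X : Type*} [MeasurableSpace Ω] [MeasurableSpace X]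
    (P : MeasureTheory.Measure Ω) (η : Ω → MeasureTheory.Measure X)
    (lam : MeasureTheory.Measure X) : Prop :=
  Measurable η ∧
  (∀ A : Set X, MeasurableSet A → lam A ≠ ⊤ → ∀ n : ℕ,
    P {ω | η ω A = n}
      = ENNReal.ofReal (Real.exp (-(lam A).toReal) * (lam A).toReal ^ n / n.factorial)) ∧
  (∀ {ι : Type} (A : ι → Set X), (∀ i, MeasurableSet (A i)) →
    Pairwise (Function.onFun Disjoint A) →
    ProbabilityTheory.iIndepFun (fun i ω => η ω (A i)) P)

/-- `y` is among the `k` nearest neighbours of `x` in the configuration `μ`: fewer than `k`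
points of `μ` are strictly closer to `x` than `y` is. -/
def IsKNearest {E : Type*} [MeasurableSpace E] [PseudoMetricSpace E]
    (k : ℕ) (x y : E) (μ : Measure E) : Prop :=
  μ {z | dist x z < dist x y} < (k : ℝ≥0∞)

/-- `x` and `y` are joined by an edge of the `k`-nearest neighbour graph over the
configuration `μ`: `y` is among the `k` nearest neighbours of `x` in `μ + δ_y`, or `x` is among
the `k` nearest neighbours of `y` in `μ + δ_x`. -/
def KNNEdge {E : Type*} [MeasurableSpace E] [PseudoMetricSpace E]
    (k : ℕ) (x y : E) (μ : Measure E) : Prop :=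
  IsKNearest k x y (μ + Measure.dirac y) ∨ IsKNearest k y x (μ + Measure.dirac x)

open Module

lemma exp_neg_mul_pow_div_factorial_le {l : ℝ} (hl : 0 ≤ l) (n : ℕ) :
    Real.exp (-l) * l ^ n / n.factorial ≤ 2 ^ n * Real.exp (-(l / 2)) := by
  have h := Real.pow_div_factorial_le_exp (l / 2) (by positivity) n
  rw [div_pow, div_div, div_le_iff₀ (by positivity)] at h
  calc Real.exp (-l) * l ^ n / n.factorial
      ≤ Real.exp (-l) * (Real.exp (l / 2) * (2 ^ n * n.factorial)) / n.factorial := by gcongr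
    _ = 2 ^ n * Real.exp (-(l / 2)) := by
        rw [show -(l / 2) = -l + l / 2 by ring, Real.exp_add]
        field_simp

namespace IsPoissonProcess

variable {Ω X : Type*} [MeasurableSpace Ω] [MeasurableSpace X] {P : Measure Ω}
  {η : Ω → Measure X} {lam : Measure X} {A B : Set X}

lemma measurable_count (hη : IsPoissonProcess P η lam) (hA : MeasurableSet A) :
    Measurable fun ω => η ω A :=
  (Measure.measurable_coe hA).comp hη.1

lemma indepFun_count (hη : IsPoissonProcess P η lam) (hA : MeasurableSet A)
    (hB : MeasurableSet B) (hAB : Disjoint A B) :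
    IndepFun (fun ω => η ω A) (fun ω => η ω B) P :=
  (hη.2.2 (fun b => bif b then A else B) (fun b => by cases b <;> assumption)
    (pairwise_disjoint_on_bool.2 hAB)).indepFun (i := true) (j := false) (by decide)

variable [IsProbabilityMeasure P]

lemma ae_count_eq_natCast (hη : IsPoissonProcess P η lam) (hA : MeasurableSet A)
    (hfin : lam A ≠ ⊤) : ∀ᵐ ω ∂P, ∃ n : ℕ, η ω A = n := by
  have hm (n : ℕ) : MeasurableSet {ω | η ω A = n} :=
    hη.measurable_count hA (measurableSet_singleton _)
  have hdisj : Pairwise (Function.onFun Disjoint fun n : ℕ => {ω | η ω A = n}) :=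
    fun m n hmn => Set.disjoint_left.2 fun ω hm hn => hmn (Nat.cast_injective (hm.symm.trans hn))
  have hpoisson : HasSum (fun n : ℕ =>
      Real.exp (-(lam A).toReal) * (lam A).toReal ^ n / n.factorial) 1 :=
    hasSum_one_poissonMeasure (lam A).toNNReal
  have hfull : P (⋃ n : ℕ, {ω | η ω A = n}) = 1 := by
    rw [measure_iUnion hdisj hm]
    simp_rw [hη.2.1 A hA hfin]
    rw [← ENNReal.ofReal_tsum_of_nonneg (fun n => by positivity) hpoisson.summable,
      hpoisson.tsum_eq, ENNReal.ofReal_one]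
  rw [ae_iff, ← (prob_compl_eq_zero_iff (MeasurableSet.iUnion hm)).2 hfull]
  congr 1
  ext ω
  simp

lemma measure_count_ne_zero_le (hη : IsPoissonProcess P η lam) (hA : MeasurableSet A)
    (hfin : lam A ≠ ⊤) : P {ω | η ω A ≠ 0} ≤ lam A := by
  have hzero : P {ω | η ω A = 0} = ENNReal.ofReal (Real.exp (-(lam A).toReal)) := by
    simpa using hη.2.1 A hA hfin 0
  have hm : MeasurableSet {ω | η ω A = 0} := hη.measurable_count hA (measurableSet_singleton 0)
  rw [show {ω | η ω A ≠ 0} = {ω | η ω A = 0}ᶜ from rfl, prob_compl_eq_one_sub hm,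
    tsub_le_iff_right]
  calc 1 ≤ ENNReal.ofReal ((lam A).toReal + Real.exp (-(lam A).toReal)) :=
        ENNReal.one_le_ofReal.2 (by linarith [Real.add_one_le_exp (-(lam A).toReal)])
    _ = lam A + P {ω | η ω A = 0} := by
        rw [ENNReal.ofReal_add ENNReal.toReal_nonneg (Real.exp_pos _).le,
          ENNReal.ofReal_toReal hfin, hzero]

lemma measure_count_lt_le (hη : IsPoissonProcess P η lam) (hA : MeasurableSet A)
    (hfin : lam A ≠ ⊤) {v : ℝ} (hv : ENNReal.ofReal v ≤ lam A) (k : ℕ) :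
    P {ω | η ω A < k} ≤ ENNReal.ofReal (2 ^ k * Real.exp (-(v / 2))) := by
  set l := (lam A).toReal
  have hvl : v ≤ l := (ENNReal.ofReal_le_iff_le_toReal hfin).1 hv
  have hsub : {ω | η ω A < k} ≤ᵐ[P] ⋃ n ∈ Finset.range k, {ω | η ω A = n} := by
    filter_upwards [hη.ae_count_eq_natCast hA hfin] with ω ⟨n, hn⟩ (hlt : η ω A < k)
    rw [hn, Nat.cast_lt] at hlt
    exact Set.mem_biUnion (Finset.mem_range.2 hlt) hn
  have hgeom : ∑ n ∈ Finset.range k, (2 : ℝ) ^ n ≤ 2 ^ k := by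
    exact_mod_cast (Nat.geomSum_lt le_rfl fun n hn => Finset.mem_range.1 hn).le
  calc P {ω | η ω A < k} ≤ ∑ n ∈ Finset.range k, P {ω | η ω A = n} :=
        (measure_mono_ae hsub).trans (measure_biUnion_finset_le _ _)
    _ = ENNReal.ofReal (∑ n ∈ Finset.range k, Real.exp (-l) * l ^ n / n.factorial) := by
        rw [ENNReal.ofReal_sum_of_nonneg fun n _ => by positivity]
        exact Finset.sum_congr rfl fun n _ => hη.2.1 A hA hfin n
    _ ≤ ENNReal.ofReal (2 ^ k * Real.exp (-(v / 2))) := by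
        refine ENNReal.ofReal_le_ofReal ?_
        calc ∑ n ∈ Finset.range k, Real.exp (-l) * l ^ n / n.factorial
            ≤ ∑ n ∈ Finset.range k, 2 ^ n * Real.exp (-(l / 2)) :=
              Finset.sum_le_sum fun n _ => exp_neg_mul_pow_div_factorial_le ENNReal.toReal_nonneg n
          _ = (∑ n ∈ Finset.range k, (2 : ℝ) ^ n) * Real.exp (-(l / 2)) := (Finset.sum_mul ..).symm
          _ ≤ 2 ^ k * Real.exp (-(v / 2)) := by gcongr

lemma measure_count_ne_zero_inter_count_lt_le (hη : IsPoissonProcess P η lam)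
    (hA : MeasurableSet A) (hB : MeasurableSet B) (hAB : Disjoint A B) (hfinA : lam A ≠ ⊤)
    (hfinB : lam B ≠ ⊤) {v : ℝ} (hv : ENNReal.ofReal v ≤ lam B) (k : ℕ) :
    P ({ω | η ω A ≠ 0} ∩ {ω | η ω B < k})
      ≤ lam A * ENNReal.ofReal (2 ^ k * Real.exp (-(v / 2))) :=
  ((hη.indepFun_count hA hB hAB).measure_inter_preimage_eq_mul {0}ᶜ (Set.Iio (k : ℝ≥0∞))
    (measurableSet_singleton 0).compl measurableSet_Iio).le.trans
    (mul_le_mul' (hη.measure_count_ne_zero_le hA hfinA) (hη.measure_count_lt_le hB hfinB hv k))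

lemma measure_count_ne_zero_eq_zero (hη : IsPoissonProcess P η lam) (hA : MeasurableSet A)
    (h0 : lam A = 0) : P {ω | η ω A ≠ 0} = 0 :=
  le_antisymm ((hη.measure_count_ne_zero_le hA (by simp [h0])).trans_eq h0) zero_le

end IsPoissonProcess

section Intensity

variable {α : Type*} [MeasurableSpace α] {μ : Measure α} {H : Set α}

lemma ofReal_smul_restrict_apply_ne_top (hH : μ H ≠ ⊤) (t : ℝ) (A : Set α) :
    (ENNReal.ofReal t • μ.restrict H) A ≠ ⊤ := by
  rw [Measure.smul_apply, smul_eq_mul]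
  refine ENNReal.mul_ne_top ENNReal.ofReal_ne_top (ne_top_of_le_ne_top hH ?_)
  simpa using measure_mono (μ := μ.restrict H) (Set.subset_univ A)

lemma ofReal_mul_le_ofReal_smul_restrict_apply {A : Set α} {t v : ℝ} (ht : 0 ≤ t)
    (hA : MeasurableSet A) (hv : ENNReal.ofReal v ≤ μ (A ∩ H)) :
    ENNReal.ofReal (t * v) ≤ (ENNReal.ofReal t • μ.restrict H) A := by
  rw [Measure.smul_apply, Measure.restrict_apply hA, smul_eq_mul, ENNReal.ofReal_mul ht]
  gcongr

end Intensity

section Geometry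

variable {E : Type*} [NormedAddCommGroup E] [NormedSpace ℝ E]

lemma Convex.ball_add_smul_sub_subset {H : Set E} (hH : Convex ℝ H) {z p : E} {ρ θ : ℝ}
    (hz : z ∈ H) (hp : ball p ρ ⊆ H) (hθ₀ : 0 < θ) (hθ₁ : θ ≤ 1) :
    ball (z + θ • (p - z)) (θ * ρ) ⊆ H := by
  intro w hw
  set u := p + θ⁻¹ • (w - (z + θ • (p - z)))
  have hu : u ∈ ball p ρ := by
    rw [mem_ball, dist_eq_norm, add_sub_cancel_left, norm_smul, norm_inv,
      Real.norm_of_nonneg hθ₀.le, inv_mul_lt_iff₀ hθ₀, ← dist_eq_norm]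
    exact hw
  have hwu : w = z + θ • (u - z) := by
    rw [add_sub_right_comm, smul_add, smul_smul, mul_inv_cancel₀ hθ₀.ne', one_smul]
    abel
  rw [hwu]
  exact hH.add_smul_sub_mem hz (hp hu) ⟨hθ₀.le, hθ₁⟩

variable [FiniteDimensional ℝ E] [MeasurableSpace E] (μ : Measure E) [μ.IsAddHaarMeasure]

lemma measureReal_ball_zero_one_pos : 0 < μ.real (ball (0 : E) 1) :=
  ENNReal.toReal_pos (measure_ball_pos μ 0 one_pos).ne' measure_ball_lt_top.ne

lemma exists_measure_ball_le [BorelSpace E] [Nontrivial E] {s ε : ℝ} (hs : 0 < s)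
    (hε : 0 < ε) : ∃ δ, 0 < δ ∧ δ ≤ s ∧ ∀ u : E, μ (ball u δ) ≤ ENNReal.ofReal ε := by
  have hω := measureReal_ball_zero_one_pos μ
  refine ⟨min s (min 1 (ε / μ.real (ball 0 1))), by positivity, min_le_left _ _, fun u => ?_⟩
  set δ := min s (min 1 (ε / μ.real (ball 0 1)))
  have hδ : 0 < δ := by positivity
  have hδε : δ * μ.real (ball 0 1) ≤ ε :=
    (le_div_iff₀ hω).1 ((min_le_right _ _).trans (min_le_right _ _))
  rw [μ.addHaar_ball_of_pos u hδ, ← ofReal_measureReal measure_ball_lt_top.ne,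
    ← ENNReal.ofReal_mul (by positivity)]
  refine ENNReal.ofReal_le_ofReal (le_trans ?_ hδε)
  gcongr
  exact pow_le_of_le_one hδ.le ((min_le_right _ _).trans (min_le_left _ _)) finrank_pos.ne'

lemma Convex.exists_measure_ball_inter_ge [BorelSpace E] {H : Set E} (hH : Convex ℝ H)
    (hb : Bornology.IsBounded H) (hint : (interior H).Nonempty) :
    ∃ c > 0, ∀ z ∈ H, ∀ r, 0 < r → r ≤ diam H →
      ENNReal.ofReal (c * r ^ finrank ℝ E) ≤ μ (ball z r ∩ H) := by
  obtain ⟨p, hp⟩ := hint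
  obtain ⟨ρ, hρ, hpρ⟩ := Metric.isOpen_iff.1 isOpen_interior p hp
  have hball : ball p ρ ⊆ H := hpρ.trans interior_subset
  have hD : 0 ≤ diam H := diam_nonneg
  have hω := measureReal_ball_zero_one_pos μ
  refine ⟨(ρ / (ρ + diam H)) ^ finrank ℝ E * μ.real (ball 0 1), by positivity,
    fun z hz r hr hrD => ?_⟩
  set θ := r / (ρ + diam H)
  have hθ₀ : 0 < θ := by positivity
  have hθ₁ : θ ≤ 1 := (div_le_one (by positivity)).2 (by linarith)
  have hpz : dist p z ≤ diam H := dist_le_diam_of_mem hb (interior_subset hp) hz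
  have hsub : ball (z + θ • (p - z)) (θ * ρ) ⊆ ball z r ∩ H := by
    refine Set.subset_inter (ball_subset_ball' ?_) (hH.ball_add_smul_sub_subset hz hball hθ₀ hθ₁)
    rw [dist_eq_norm, add_sub_cancel_left, norm_smul, Real.norm_of_nonneg hθ₀.le, ← dist_eq_norm]
    calc θ * ρ + θ * dist p z ≤ θ * (ρ + diam H) := by nlinarith
      _ = r := div_mul_cancel₀ r (by positivity)
  calc ENNReal.ofReal ((ρ / (ρ + diam H)) ^ finrank ℝ E * μ.real (ball 0 1) * r ^ finrank ℝ E)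
      = ENNReal.ofReal ((θ * ρ) ^ finrank ℝ E) * μ (ball 0 1) := by
        rw [← ofReal_measureReal measure_ball_lt_top.ne, ← ENNReal.ofReal_mul (by positivity)]
        congr 1
        rw [mul_pow, div_pow, div_pow]
        ring
    _ = μ (ball (z + θ • (p - z)) (θ * ρ)) := (μ.addHaar_ball_of_pos _ (by positivity)).symm
    _ ≤ μ (ball z r ∩ H) := measure_mono hsub

end Geometry

lemma exists_measurable_partition_subset_ball {α : Type*} [PseudoMetricSpace α]
    [TopologicalSpace.SeparableSpace α] [MeasurableSpace α] [OpensMeasurableSpace α]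
    {H : Set α} (hH : H.Nonempty) {δ : ℝ} (hδ : 0 < δ) :
    ∃ (u : ℕ → α) (Q : ℕ → Set α), (∀ i, u i ∈ H) ∧ (∀ i, MeasurableSet (Q i)) ∧
      Pairwise (Function.onFun Disjoint Q) ∧ (∀ i, Q i ⊆ ball (u i) δ) ∧ H ⊆ ⋃ i, Q i := by
  have : Nonempty H := hH.to_subtype
  obtain ⟨v, hv⟩ := TopologicalSpace.exists_dense_seq H
  refine ⟨fun i => v i, disjointed fun i => ball (v i : α) δ, fun i => (v i).2,
    MeasurableSet.disjointed fun i => measurableSet_ball, disjoint_disjointed _,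
    disjointed_subset _, ?_⟩
  rw [iUnion_disjointed]
  intro y hy
  obtain ⟨i, hi⟩ := Metric.denseRange_iff.1 hv ⟨y, hy⟩ δ hδ
  exact Set.mem_iUnion.2 ⟨i, hi⟩

lemma tsum_mul_measure_le_lintegral {α ι : Type*} [MeasurableSpace α] [Countable ι]
    (μ : Measure α) {Q : ι → Set α} (hQm : ∀ i, MeasurableSet (Q i))
    (hQd : Pairwise (Function.onFun Disjoint Q)) {c : ι → ℝ≥0∞} {g : α → ℝ≥0∞}
    (hcg : ∀ i, ∀ w ∈ Q i, c i ≤ g w) :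
    ∑' i, c i * μ (Q i) ≤ ∫⁻ w, g w ∂μ :=
  calc ∑' i, c i * μ (Q i) = ∑' i, ∫⁻ _ in Q i, c i ∂μ := by simp_rw [setLIntegral_const]
    _ ≤ ∑' i, ∫⁻ w in Q i, g w ∂μ :=
        ENNReal.tsum_le_tsum fun i => setLIntegral_mono' (hQm i) (hcg i)
    _ = ∫⁻ w in ⋃ i, Q i, g w ∂μ := (lintegral_iUnion hQm hQd g).symm
    _ ≤ ∫⁻ w, g w ∂μ := setLIntegral_le_lintegral _ _

section RadialIntegral

variable {E : Type*} [NormedAddCommGroup E] [NormedSpace ℝ E] [FiniteDimensional ℝ E]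
  [MeasurableSpace E] [BorelSpace E] [Nontrivial E] (μ : Measure E) [μ.IsAddHaarMeasure]
  {a : ℝ}

lemma eqOn_pow_smul_exp_neg_mul_pow {n : ℕ} (hn : 0 < n) :
    Set.EqOn (fun y : ℝ => y ^ (n - 1) • Real.exp (-(a * y ^ n)))
      (fun y => y ^ ((n : ℝ) - 1) * Real.exp (-a * y ^ (n : ℝ))) (Set.Ioi 0) := by
  intro y _
  simp [← Real.rpow_natCast, Nat.cast_sub hn]

lemma integrable_exp_neg_mul_norm_pow_finrank (ha : 0 < a) :
    Integrable (fun x : E => Real.exp (-(a * ‖x‖ ^ finrank ℝ E))) μ := by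
  have hn : 0 < finrank ℝ E := finrank_pos
  refine (integrable_fun_norm_addHaar μ (f := fun y => Real.exp (-(a * y ^ finrank ℝ E)))).2 ?_
  refine (integrableOn_rpow_mul_exp_neg_mul_rpow ?_ (by positivity) ha).congr_fun
    (eqOn_pow_smul_exp_neg_mul_pow hn).symm measurableSet_Ioi
  have : (1 : ℝ) ≤ finrank ℝ E := by exact_mod_cast hn
  linarith

lemma integral_exp_neg_mul_norm_pow_finrank (ha : 0 < a) :
    ∫ x, Real.exp (-(a * ‖x‖ ^ finrank ℝ E)) ∂μ = μ.real (ball 0 1) / a := by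
  have hn : 0 < finrank ℝ E := finrank_pos
  have hn' : (0 : ℝ) < finrank ℝ E := by exact_mod_cast hn
  have hradial : ∫ y in Set.Ioi (0 : ℝ), y ^ (finrank ℝ E - 1) • Real.exp (-(a * y ^ finrank ℝ E))
      = 1 / (a * finrank ℝ E) := by
    rw [setIntegral_congr_fun measurableSet_Ioi (eqOn_pow_smul_exp_neg_mul_pow hn),
      integral_rpow_mul_exp_neg_mul_rpow hn' (by linarith) ha]
    simp only [sub_add_cancel, neg_div, div_self hn'.ne', Real.rpow_neg_one, Real.Gamma_one]
    field_simp
  rw [integral_fun_norm_addHaar μ (fun y => Real.exp (-(a * y ^ finrank ℝ E))), hradial,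
    nsmul_eq_mul, smul_eq_mul]
  field_simp

lemma lintegral_exp_neg_mul_norm_sub_pow_finrank (ha : 0 < a) (x : E) :
    ∫⁻ w, ENNReal.ofReal (Real.exp (-(a * ‖w - x‖ ^ finrank ℝ E))) ∂μ
      = ENNReal.ofReal (μ.real (ball 0 1) / a) := by
  rw [lintegral_sub_right_eq_self (fun w => ENNReal.ofReal (Real.exp (-(a * ‖w‖ ^ finrank ℝ E)))) x,
    ← ofReal_integral_eq_lintegral_ofReal (integrable_exp_neg_mul_norm_pow_finrank μ ha)
      (ae_of_all _ fun _ => (Real.exp_pos _).le),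
    integral_exp_neg_mul_norm_pow_finrank μ ha]

lemma tsum_ofReal_exp_neg_mul_pow_mul_measure_le {Q : ℕ → Set E}
    (hQm : ∀ i, MeasurableSet (Q i)) (hQd : Pairwise (Function.onFun Disjoint Q)) {x : E}
    {r : ℕ → ℝ} {L : ℝ} (hL : 0 < L) (ha : 0 < a) (hQr : ∀ i, ∀ w ∈ Q i, ‖w - x‖ ≤ L * r i) :
    ∑' i, ENNReal.ofReal (Real.exp (-(a * r i ^ finrank ℝ E))) * μ (Q i)
      ≤ ENNReal.ofReal (L ^ finrank ℝ E * μ.real (ball 0 1) / a) := by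
  calc ∑' i, ENNReal.ofReal (Real.exp (-(a * r i ^ finrank ℝ E))) * μ (Q i)
      ≤ ∫⁻ w, ENNReal.ofReal (Real.exp (-(a / L ^ finrank ℝ E * ‖w - x‖ ^ finrank ℝ E))) ∂μ := by
        refine tsum_mul_measure_le_lintegral μ hQm hQd fun i w hw => ?_
        have h : ‖w - x‖ ^ finrank ℝ E ≤ L ^ finrank ℝ E * r i ^ finrank ℝ E := by
          rw [← mul_pow]
          exact pow_le_pow_left₀ (norm_nonneg _) (hQr i w hw) _
        refine ENNReal.ofReal_le_ofReal (Real.exp_le_exp.2 (neg_le_neg ?_))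
        calc a / L ^ finrank ℝ E * ‖w - x‖ ^ finrank ℝ E
            ≤ a / L ^ finrank ℝ E * (L ^ finrank ℝ E * r i ^ finrank ℝ E) := by gcongr
          _ = a * r i ^ finrank ℝ E := by field_simp
    _ = ENNReal.ofReal (L ^ finrank ℝ E * μ.real (ball 0 1) / a) := by
        rw [lintegral_exp_neg_mul_norm_sub_pow_finrank μ (by positivity) x]
        congr 1
        field_simp

end RadialIntegral

lemma mem_of_measure_singleton_ne_zero {α : Type*} [MeasurableSpace α] {ν : Measure α} {y : α}
    {H : Set α} (hy : ν {y} ≠ 0) (hH : ν Hᶜ = 0) : y ∈ H := by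
  by_contra h
  exact hy (measure_mono_null (Set.singleton_subset_iff.2 h) hH)

section NearestNeighbour

variable {E : Type*} [MeasurableSpace E] [PseudoMetricSpace E] {k : ℕ} {x y : E} {s : ℝ}
  {ν : Measure E} {H : Set E}

/-- `M₁(x, ν) ≥ s`: adding `x` to the configuration `ν` creates an edge of length at least `s`. -/
def HasLongNewEdge (k : ℕ) (x : E) (s : ℝ) (ν : Measure E) : Prop :=
  ∃ y, ν {y} ≠ 0 ∧ s ≤ dist x y ∧
    (IsKNearest k x y (ν + Measure.dirac x) ∨ IsKNearest k y x (ν + Measure.dirac x))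

lemma IsKNearest.measure_ball_lt (h : IsKNearest k x y ν) : ν (ball x (dist x y)) < k := by
  simpa only [IsKNearest, ball, dist_comm] using h

lemma IsKNearest.pos (h : IsKNearest k x y ν) : 0 < k := by
  exact_mod_cast zero_le.trans_lt h

lemma KNNEdge.self (hk : 0 < k) (x : E) (ν : Measure E) : KNNEdge k x x ν :=
  Or.inl (by simp [IsKNearest, not_lt.2 dist_nonneg, hk])

lemma HasLongNewEdge.le_diam (h : HasLongNewEdge k x s ν) (hH : ν Hᶜ = 0) (hx : x ∈ H)
    (hb : Bornology.IsBounded H) : s ≤ diam H := by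
  obtain ⟨y, hy, hs, -⟩ := h
  exact hs.trans (dist_le_diam_of_mem hb hx (mem_of_measure_singleton_ne_zero hy hH))

lemma HasLongNewEdge.cover_cases {δ : ℝ} {u : ℕ → E} {Q : ℕ → Set E}
    (h : HasLongNewEdge k x s ν) (hH : ν Hᶜ = 0) (hδ : 4 * δ ≤ s)
    (hQu : ∀ i, Q i ⊆ ball (u i) δ) (hHQ : H ⊆ ⋃ i, Q i) :
    ν (ball x s) < k ∨
      ∃ i, ν (Q i) ≠ 0 ∧ ν (ball (u i) (max s (dist x (u i)) / 2) \ Q i) < k := by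
  obtain ⟨y, hy, hs, hxy | hyx⟩ := h
  · left
    calc ν (ball x s) ≤ (ν + Measure.dirac x) (ball x (dist x y)) := by
          rw [Measure.add_apply]
          exact (measure_mono (ball_subset_ball hs)).trans le_self_add
      _ < k := hxy.measure_ball_lt
  · right
    obtain ⟨i, hi⟩ := Set.mem_iUnion.1 (hHQ (mem_of_measure_singleton_ne_zero hy hH))
    have hyu : dist y (u i) < δ := hQu i hi
    refine ⟨i, fun h0 => hy (measure_mono_null (Set.singleton_subset_iff.2 hi) h0), ?_⟩
    have hball : ball (u i) (max s (dist x (u i)) / 2) ⊆ ball y (dist y x) := by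
      refine ball_subset_ball' ?_
      have htri := dist_triangle x y (u i)
      have hmax : max s (dist x (u i)) ≤ 2 * (dist x y - dist y (u i)) :=
        max_le (by linarith [dist_nonneg (x := y) (y := u i)])
          (by linarith [dist_nonneg (x := y) (y := u i)])
      rw [dist_comm (u i) y, dist_comm y x]
      linarith
    calc ν (ball (u i) (max s (dist x (u i)) / 2) \ Q i)
        ≤ (ν + Measure.dirac x) (ball y (dist y x)) := by
          rw [Measure.add_apply]
          exact (measure_mono (Set.sdiff_subset.trans hball)).trans le_self_add
      _ < k := hyx.measure_ball_lt

end NearestNeighbour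

section TailBound

variable {Ω : Type*} [MeasurableSpace Ω] {P : Measure Ω} [IsProbabilityMeasure P]

lemma measure_hasLongNewEdge_le_add_tsum {E : Type*} [MeasurableSpace E] [PseudoMetricSpace E]
    {η : Ω → Measure E} {lam : Measure E} {H : Set E} (hη : IsPoissonProcess P η lam)
    (hH : MeasurableSet H) (hlam : lam Hᶜ = 0) {k : ℕ} {x : E} {s δ : ℝ} (hδ : 4 * δ ≤ s)
    {u : ℕ → E} {Q : ℕ → Set E} (hQu : ∀ i, Q i ⊆ ball (u i) δ) (hHQ : H ⊆ ⋃ i, Q i) :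
    P {ω | HasLongNewEdge k x s (η ω)} ≤ P {ω | η ω (ball x s) < k} + ∑' i,
      P ({ω | η ω (Q i) ≠ 0} ∩ {ω | η ω (ball (u i) (max s (dist x (u i)) / 2) \ Q i) < k}) := by
  calc P {ω | HasLongNewEdge k x s (η ω)}
      ≤ P ({ω | η ω Hᶜ ≠ 0} ∪ ({ω | η ω (ball x s) < k} ∪ ⋃ i, ({ω | η ω (Q i) ≠ 0} ∩
          {ω | η ω (ball (u i) (max s (dist x (u i)) / 2) \ Q i) < k}))) := by
        refine measure_mono fun ω (hω : HasLongNewEdge k x s (η ω)) => ?_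
        by_cases h0 : η ω Hᶜ = 0
        · exact Or.inr ((hω.cover_cases h0 hδ hQu hHQ).imp id Set.mem_iUnion.2)
        · exact Or.inl h0
    _ ≤ P {ω | η ω Hᶜ ≠ 0} + (P {ω | η ω (ball x s) < k} + ∑' i, P ({ω | η ω (Q i) ≠ 0} ∩
          {ω | η ω (ball (u i) (max s (dist x (u i)) / 2) \ Q i) < k})) :=
        (measure_union_le _ _).trans (add_le_add le_rfl
          ((measure_union_le _ _).trans (add_le_add le_rfl (measure_iUnion_le _))))
    _ = _ := by rw [hη.measure_count_ne_zero_eq_zero hH.compl hlam, zero_add]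

lemma measure_count_ne_zero_inter_count_diff_lt_le {α : Type*} [MeasurableSpace α]
    {μ : Measure α} {η : Ω → Measure α} {H Q B : Set α} {t V : ℝ} (hH : μ H ≠ ⊤)
    (hη : IsPoissonProcess P η (ENNReal.ofReal t • μ.restrict H)) (ht : 0 ≤ t)
    (hQ : MeasurableSet Q) (hB : MeasurableSet B) (hV : ENNReal.ofReal V ≤ μ (B ∩ H))
    (hQV : μ Q ≤ ENNReal.ofReal (V / 2)) (k : ℕ) :
    P ({ω | η ω Q ≠ 0} ∩ {ω | η ω (B \ Q) < k})
      ≤ ENNReal.ofReal t * μ Q * ENNReal.ofReal (2 ^ k * Real.exp (-(t * (V / 2) / 2))) := by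
  have hBQ : ENNReal.ofReal (V / 2) ≤ μ ((B \ Q) ∩ H) := by
    rcases le_or_gt V 0 with hV0 | hV0
    · simp [ENNReal.ofReal_of_nonpos (by linarith : V / 2 ≤ 0)]
    have hsub : B ∩ H ⊆ ((B \ Q) ∩ H) ∪ Q := fun w hw => by
      by_cases hwQ : w ∈ Q <;> simp_all
    have hsplit : μ (B ∩ H) ≤ μ ((B \ Q) ∩ H) + μ Q :=
      (measure_mono hsub).trans (measure_union_le _ _)
    refine (ENNReal.add_le_add_iff_right (ENNReal.ofReal_ne_top (r := V / 2))).1 ?_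
    rw [← ENNReal.ofReal_add (by linarith) (by linarith), add_halves]
    exact hV.trans (hsplit.trans (add_le_add le_rfl hQV))
  have hfin := ofReal_smul_restrict_apply_ne_top hH t
  refine (hη.measure_count_ne_zero_inter_count_lt_le hQ (hB.diff hQ) disjoint_sdiff_self_right
    (hfin _) (hfin _) (ofReal_mul_le_ofReal_smul_restrict_apply ht (hB.diff hQ) hBQ) k).trans ?_
  rw [Measure.smul_apply, smul_eq_mul]
  gcongr
  exact Measure.restrict_le_self

lemma measure_cell_event_le {α : Type*} [PseudoMetricSpace α] [MeasurableSpace α]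
    [OpensMeasurableSpace α] {μ : Measure α} {η : Ω → Measure α} {H : Set α} {t c s : ℝ} {n : ℕ}
    (hH : μ H ≠ ⊤) (hc : 0 < c)
    (hgeom : ∀ z ∈ H, ∀ r, 0 < r → r ≤ diam H → ENNReal.ofReal (c * r ^ n) ≤ μ (ball z r ∩ H))
    (hη : IsPoissonProcess P η (ENNReal.ofReal t • μ.restrict H)) (ht : 0 < t) (hs : 0 < s)
    {Q : Set α} (hQ : MeasurableSet Q) (hQμ : μ Q ≤ ENNReal.ofReal (c * (s / 2) ^ n / 2))
    {u : α} (hu : u ∈ H) {r : ℝ} (hsr : s / 2 ≤ r) (hrD : r ≤ diam H) (k : ℕ) :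
    P ({ω | η ω Q ≠ 0} ∩ {ω | η ω (ball u r \ Q) < k})
      ≤ ENNReal.ofReal (t * 2 ^ k * Real.exp (-(t * c / 8 * (s / 2) ^ n)))
        * (ENNReal.ofReal (Real.exp (-(t * c / 8 * r ^ n))) * μ Q) := by
  have hsrn : (s / 2) ^ n ≤ r ^ n := pow_le_pow_left₀ (by positivity) hsr n
  refine (measure_count_ne_zero_inter_count_diff_lt_le hH hη ht.le hQ
    measurableSet_ball (hgeom u hu r (by linarith) hrD) (hQμ.trans (by gcongr)) k).trans ?_
  calc ENNReal.ofReal t * μ Q * ENNReal.ofReal (2 ^ k * Real.exp (-(t * (c * r ^ n / 2) / 2)))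
      = ENNReal.ofReal (t * (2 ^ k * Real.exp (-(t * (c * r ^ n / 2) / 2)))) * μ Q := by
        rw [ENNReal.ofReal_mul ht.le]
        ring
    _ ≤ ENNReal.ofReal (t * 2 ^ k * Real.exp (-(t * c / 8 * (s / 2) ^ n))
          * Real.exp (-(t * c / 8 * r ^ n))) * μ Q := by
        rw [mul_assoc (t * 2 ^ k), ← Real.exp_add, mul_assoc]
        gcongr
        nlinarith [mul_nonneg (mul_nonneg ht.le hc.le) (sub_nonneg.2 hsrn)]
    _ = _ := by
        rw [ENNReal.ofReal_mul (by positivity)]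
        ring

end TailBound

section TailBoundHaar

variable {Ω : Type*} [MeasurableSpace Ω] {P : Measure Ω} [IsProbabilityMeasure P]
  {E : Type*} [NormedAddCommGroup E] [NormedSpace ℝ E] [FiniteDimensional ℝ E]
  [MeasurableSpace E] [BorelSpace E] [Nontrivial E] {μ : Measure E} [μ.IsAddHaarMeasure]
  {η : Ω → Measure E} {H : Set E} {t c s : ℝ} {x : E}

lemma tsum_measure_cell_event_le (hK : IsCompact H) (hc : 0 < c)
    (hgeom : ∀ z ∈ H, ∀ r, 0 < r → r ≤ diam H →
      ENNReal.ofReal (c * r ^ finrank ℝ E) ≤ μ (ball z r ∩ H))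
    (hη : IsPoissonProcess P η (ENNReal.ofReal t • μ.restrict H)) (ht : 0 < t) (hx : x ∈ H)
    (hs : 0 < s) (hsD : s ≤ diam H) {δ : ℝ} (hδs : 4 * δ ≤ s)
    (hδμ : ∀ u, μ (ball u δ) ≤ ENNReal.ofReal (c * (s / 2) ^ finrank ℝ E / 2))
    {u : ℕ → E} {Q : ℕ → Set E} (huH : ∀ i, u i ∈ H) (hQm : ∀ i, MeasurableSet (Q i))
    (hQd : Pairwise (Function.onFun Disjoint Q)) (hQu : ∀ i, Q i ⊆ ball (u i) δ) (k : ℕ) :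
    ∑' i, P ({ω | η ω (Q i) ≠ 0} ∩ {ω | η ω (ball (u i) (max s (dist x (u i)) / 2) \ Q i) < k})
      ≤ ENNReal.ofReal (2 ^ k * (8 * 4 ^ finrank ℝ E * μ.real (ball 0 1) / c) *
          Real.exp (-(t * (c / (8 * 2 ^ finrank ℝ E)) * s ^ finrank ℝ E))) := by
  set n := finrank ℝ E
  set r : ℕ → ℝ := fun i => max s (dist x (u i)) / 2
  have hr (i : ℕ) : s / 2 ≤ r i ∧ r i ≤ diam H := by
    have hxu := dist_le_diam_of_mem hK.isBounded hx (huH i)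
    constructor <;> simp only [r] <;>
      linarith [le_max_left s (dist x (u i)), max_le hsD hxu]
  have hQr (i : ℕ) (w : E) (hw : w ∈ Q i) : ‖w - x‖ ≤ 4 * r i := by
    have hwu : dist w (u i) < δ := hQu i hw
    have htri := dist_triangle x (u i) w
    rw [← dist_eq_norm, dist_comm]
    simp only [r]
    linarith [le_max_left s (dist x (u i)), le_max_right s (dist x (u i)), dist_comm w (u i)]
  calc _ ≤ ∑' i, ENNReal.ofReal (t * 2 ^ k * Real.exp (-(t * c / 8 * (s / 2) ^ n)))
        * (ENNReal.ofReal (Real.exp (-(t * c / 8 * r i ^ n))) * μ (Q i)) :=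
        ENNReal.tsum_le_tsum fun i => measure_cell_event_le hK.measure_lt_top.ne hc hgeom hη ht hs
          (hQm i) ((measure_mono (hQu i)).trans (hδμ (u i))) (huH i) (hr i).1 (hr i).2 k
    _ ≤ ENNReal.ofReal (t * 2 ^ k * Real.exp (-(t * c / 8 * (s / 2) ^ n)))
        * ENNReal.ofReal (4 ^ n * μ.real (ball 0 1) / (t * c / 8)) := by
        rw [ENNReal.tsum_mul_left]
        gcongr
        exact tsum_ofReal_exp_neg_mul_pow_mul_measure_le μ hQm hQd four_pos (by positivity) hQr
    _ = _ := by
        rw [← ENNReal.ofReal_mul (by positivity)]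
        congr 1
        rw [show t * c / 8 * (s / 2) ^ n = t * (c / (8 * 2 ^ n)) * s ^ n by
          rw [div_pow]; field_simp]
        field_simp

theorem measure_hasLongNewEdge_le (hK : IsCompact H) (hc : 0 < c)
    (hgeom : ∀ z ∈ H, ∀ r, 0 < r → r ≤ diam H →
      ENNReal.ofReal (c * r ^ finrank ℝ E) ≤ μ (ball z r ∩ H))
    (hη : IsPoissonProcess P η (ENNReal.ofReal t • μ.restrict H)) (ht : 0 < t) (hx : x ∈ H)
    (hs : 0 < s) (hsD : s ≤ diam H) (k : ℕ) :
    P {ω | HasLongNewEdge k x s (η ω)}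
      ≤ ENNReal.ofReal (2 ^ k * (1 + 8 * 4 ^ finrank ℝ E * μ.real (ball 0 1) / c) *
          Real.exp (-(t * (c / (8 * 2 ^ finrank ℝ E)) * s ^ finrank ℝ E))) := by
  set n := finrank ℝ E
  obtain ⟨δ, hδ, hδs, hδμ⟩ :=
    exists_measure_ball_le μ (by positivity : 0 < s / 4) (by positivity : 0 < c * (s / 2) ^ n / 2)
  obtain ⟨u, Q, huH, hQm, hQd, hQu, hHQ⟩ := exists_measurable_partition_subset_ball ⟨x, hx⟩ hδ
  have hcentre : P {ω | η ω (ball x s) < k}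
      ≤ ENNReal.ofReal (2 ^ k * Real.exp (-(t * (c / (8 * 2 ^ n)) * s ^ n))) := by
    refine (hη.measure_count_lt_le measurableSet_ball
      (ofReal_smul_restrict_apply_ne_top hK.measure_lt_top.ne t _)
      (ofReal_mul_le_ofReal_smul_restrict_apply ht.le measurableSet_ball
        (hgeom x hx s hs hsD)) k).trans (ENNReal.ofReal_le_ofReal ?_)
    gcongr
    have h2n : (1 : ℝ) ≤ 2 ^ n := one_le_pow₀ one_le_two
    calc t * (c / (8 * 2 ^ n)) * s ^ n ≤ t * (c / 2) * s ^ n := by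
          gcongr
          linarith
      _ = t * (c * s ^ n) / 2 := by ring
  calc P {ω | HasLongNewEdge k x s (η ω)}
      ≤ P {ω | η ω (ball x s) < k} + ∑' i, P ({ω | η ω (Q i) ≠ 0} ∩
          {ω | η ω (ball (u i) (max s (dist x (u i)) / 2) \ Q i) < k}) :=
        measure_hasLongNewEdge_le_add_tsum hη hK.measurableSet
          (by simp [Measure.restrict_apply hK.measurableSet.compl]) (by linarith) hQu hHQ
    _ ≤ ENNReal.ofReal (2 ^ k * Real.exp (-(t * (c / (8 * 2 ^ n)) * s ^ n)))
        + ENNReal.ofReal (2 ^ k * (8 * 4 ^ n * μ.real (ball 0 1) / c) *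
          Real.exp (-(t * (c / (8 * 2 ^ n)) * s ^ n))) :=
        add_le_add hcentre (tsum_measure_cell_event_le hK hc hgeom hη ht hx hs hsD (by linarith)
          hδμ huH hQm hQd hQu k)
    _ = _ := by
        rw [← ENNReal.ofReal_add (by positivity) (by positivity)]
        ring_nf

end TailBoundHaar

theorem exists_tail_bound_hasLongNewEdge {Ω : Type*} [MeasurableSpace Ω] (P : Measure Ω)
    [IsProbabilityMeasure P] {E : Type*} [NormedAddCommGroup E] [NormedSpace ℝ E]
    [FiniteDimensional ℝ E] [MeasurableSpace E] [BorelSpace E] [Nontrivial E] (μ : Measure E)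
    [μ.IsAddHaarMeasure] {H : Set E} (hK : IsCompact H) (hconv : Convex ℝ H)
    (hint : (interior H).Nonempty) (k : ℕ) :
    ∃ C₁ : ℝ, 0 < C₁ ∧ ∃ c₁ : ℝ, 0 < c₁ ∧ ∀ t : ℝ, 0 < t → ∀ η : Ω → Measure E,
      IsPoissonProcess P η (ENNReal.ofReal t • μ.restrict H) → ∀ s : ℝ, 0 ≤ s → ∀ x ∈ H,
        P {ω | HasLongNewEdge k x s (η ω)}
          ≤ ENNReal.ofReal (C₁ * Real.exp (-(t * c₁ * s ^ finrank ℝ E))) := by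
  obtain ⟨c, hc, hgeom⟩ := hconv.exists_measure_ball_inter_ge μ hK.isBounded hint
  have hω := measureReal_ball_zero_one_pos μ
  refine ⟨2 ^ k * (1 + 8 * 4 ^ finrank ℝ E * μ.real (ball 0 1) / c), by positivity,
    c / (8 * 2 ^ finrank ℝ E), by positivity, fun t ht η hη s hs x hx => ?_⟩
  rcases hs.eq_or_lt with rfl | hs
  · refine prob_le_one.trans (ENNReal.one_le_ofReal.2 ?_)
    rw [zero_pow finrank_pos.ne', mul_zero, neg_zero, Real.exp_zero, mul_one]
    exact one_le_mul_of_one_le_of_one_le (one_le_pow₀ one_le_two)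
      (le_add_of_nonneg_right (by positivity))
  by_cases hsD : s ≤ diam H
  · exact measure_hasLongNewEdge_le hK hc hgeom hη ht hx hs hsD k
  · refine (measure_mono_null (fun ω (h : HasLongNewEdge k x s (η ω)) (h0 : η ω Hᶜ = 0) =>
      hsD (h.le_diam h0 hx hK.isBounded)) (hη.measure_count_ne_zero_eq_zero hK.measurableSet.compl
        (by simp [Measure.restrict_apply hK.measurableSet.compl]))).trans_le zero_le

lemma exists_one_le_mul_exp_neg_mul_lt_one (C : ℝ) {c : ℝ} (hc : 0 < c) :
    ∃ t : ℝ, 1 ≤ t ∧ C * Real.exp (-(t * c)) < 1 := by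
  have h : Filter.Tendsto (fun t => C * Real.exp (-(t * c))) Filter.atTop (nhds 0) := by
    simpa using (Real.tendsto_exp_neg_atTop_nhds_zero.comp
      (Filter.tendsto_id.atTop_mul_const hc)).const_mul C
  exact ((Filter.eventually_ge_atTop 1).and (h.eventually (gt_mem_nhds one_pos))).exists

theorem knn_longest_new_edge_tail_general {d k : ℕ} {Ω : Type*} [MeasurableSpace Ω]
    (P : Measure Ω) [IsProbabilityMeasure P]
    (H : Set (EuclideanSpace ℝ (Fin d)))
    (hcomp : IsCompact H) (hconv : Convex ℝ H) (hint : (interior H).Nonempty)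
    (η : ℝ → Ω → Measure (EuclideanSpace ℝ (Fin d)))
    (hη : ∀ t : ℝ, 1 ≤ t →
      IsPoissonProcess P (η t) (ENNReal.ofReal t • volume.restrict H))
    (Ct ct : ℝ) (hct : 0 < ct)
    (hedge : ∀ x ∈ H, ∀ y ∈ H, ∀ t : ℝ, 1 ≤ t →
      P {ω | KNNEdge k x y (η t ω)}
        ≤ ENNReal.ofReal (Ct * Real.exp (-(t * ct * dist x y ^ d)))) :
    ∃ C₁ : ℝ, 0 < C₁ ∧ ∃ c₁ : ℝ, 0 < c₁ ∧
      ∀ s : ℝ, 0 ≤ s → ∀ x ∈ H, ∀ t : ℝ, 1 ≤ t →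
        P {ω | ∃ y, η t ω {y} ≠ 0 ∧ s ≤ dist x y ∧
              (IsKNearest k x y (η t ω + Measure.dirac x)
                ∨ IsKNearest k y x (η t ω + Measure.dirac x))}
          ≤ ENNReal.ofReal (C₁ * Real.exp (-(t * c₁ * s ^ d))) := by
  rcases Nat.eq_zero_or_pos d with rfl | hd
  · refine ⟨1, one_pos, 1, one_pos, fun s _ x _ t _ => ?_⟩
    rcases Nat.eq_zero_or_pos k with rfl | hk
    · refine (measure_mono_null (fun ω (⟨_, _, _, h⟩ : HasLongNewEdge 0 x s (η t ω)) => ?_)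
        measure_empty).trans_le zero_le
      exact (lt_irrefl 0 (h.elim IsKNearest.pos IsKNearest.pos)).elim
    -- `(p, p)` is always an edge, while for `d = 0` the assumed bound at `y = p` is `Ct e^{-t ct}`
    obtain ⟨p, hp⟩ := hint
    obtain ⟨t, ht, hlt⟩ := exists_one_le_mul_exp_neg_mul_lt_one Ct hct
    have h := hedge p (interior_subset hp) p (interior_subset hp) t ht
    simp only [KNNEdge.self hk, Set.ofPred_true, measure_univ, pow_zero, mul_one] at h
    exact absurd (ENNReal.one_le_ofReal.1 h) hlt.not_ge
  · have : Nontrivial (EuclideanSpace ℝ (Fin d)) :=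
      Module.nontrivial_of_finrank_pos (R := ℝ) (by rwa [finrank_euclideanSpace_fin])
    obtain ⟨C₁, hC₁, c₁, hc₁, h⟩ :=
      exists_tail_bound_hasLongNewEdge P volume hcomp hconv hint k
    refine ⟨C₁, hC₁, c₁, hc₁, fun s hs x hx t ht => ?_⟩
    have hbound := h t (by linarith) (η t) (hη t ht) s hs x hx
    rw [finrank_euclideanSpace_fin] at hbound
    exact hbound

/-- Exponential tail of the longest edge `M₁(x,η_t)` created by adding the point `x` to the
Poisson process `η_t` of intensity `t` on a compact convex window `H`, assuming the two-point
edge probability bound `P(edge between x,y) ≤ C̃ exp(−t c̃ ‖x−y‖^d)`: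
`P(M₁(x,η_t) ≥ s) ≤ C̃₁ exp(−t c̃₁ s^d)` for all `s ≥ 0`, `x ∈ H`, `t ≥ 1`. -/
theorem knn_longest_new_edge_tail {d k : ℕ} {Ω : Type*} [MeasurableSpace Ω]
    (P : Measure Ω) [IsProbabilityMeasure P]
    (H : Set (EuclideanSpace ℝ (Fin d)))
    (hcomp : IsCompact H) (hconv : Convex ℝ H) (hint : (interior H).Nonempty)
    (η : ℝ → Ω → Measure (EuclideanSpace ℝ (Fin d)))
    (hη : ∀ t : ℝ, 1 ≤ t →
      IsPoissonProcess P (η t) (ENNReal.ofReal t • volume.restrict H))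
    (Ct ct : ℝ) (hCt : 0 < Ct) (hct : 0 < ct)
    (hedge : ∀ x ∈ H, ∀ y ∈ H, ∀ t : ℝ, 1 ≤ t →
      P {ω | KNNEdge k x y (η t ω)}
        ≤ ENNReal.ofReal (Ct * Real.exp (-(t * ct * dist x y ^ d)))) :
    ∃ C₁ : ℝ, 0 < C₁ ∧ ∃ c₁ : ℝ, 0 < c₁ ∧
      ∀ s : ℝ, 0 ≤ s → ∀ x ∈ H, ∀ t : ℝ, 1 ≤ t →
        P {ω | ∃ y, η t ω {y} ≠ 0 ∧ s ≤ dist x y ∧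
              (IsKNearest k x y (η t ω + Measure.dirac x)
                ∨ IsKNearest k y x (η t ω + Measure.dirac x))}
          ≤ ENNReal.ofReal (C₁ * Real.exp (-(t * c₁ * s ^ d))) :=
  knn_longest_new_edge_tail_general P H hcomp hconv hint η hη Ct ct hct hedge
end
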